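/- Let A be a Banach algebra and I a closed two-sided ideal of A with a bounded approximate identity. If both I and A/I are ideally amenable, then A is ideally amenable: for every closed two-sided ideal J of A, every continuous derivation D: A → J* is inner. -/

import Mathlib

open ContinuousLinearMap Filter Topology

namespace Paper

structure Bimod (A : Type*) [NormedRing A] [NormedAlgebra ℂ A]
    (X : Type*) [NormedAddCommGroup X] [NormedSpace ℂ X] where
  l : A → X →L[ℂ] X
  r : A → X →L[ℂ] X
  l_mul : ∀ a b x, l (a * b) x = l a (l b x)
  r_mul : ∀ a b x, r (a * b) x = r b (r a x)
  lr : ∀ a b x, l a (r b x) = r b (l a x)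

variable {A : Type*} [NormedRing A] [NormedAlgebra ℂ A]
variable {X : Type*} [NormedAddCommGroup X] [NormedSpace ℂ X]

noncomputable def Bimod.dual (M : Bimod A X) : Bimod A (X →L[ℂ] ℂ) where
  l a := (compL ℂ X X ℂ).flip (M.r a)
  r a := (compL ℂ X X ℂ).flip (M.l a)
  l_mul a b f := by ext x; simp [M.r_mul]
  r_mul a b f := by ext x; simp [M.l_mul]
  lr a b f := by ext x; simp [M.lr]

def IsDerivation (M : Bimod A X) (D : A →L[ℂ] X) : Prop :=
  ∀ a b, D (a * b) = M.l a (D b) + M.r b (D a)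

def IsInner (M : Bimod A X) (D : A →L[ℂ] X) : Prop :=
  ∃ x, ∀ a, D a = M.l a x - M.r a x

noncomputable def Bimod.restrict (M : Bimod A X) (Y : Submodule ℂ X)
    (hl : ∀ a, ∀ y ∈ Y, M.l a y ∈ Y) (hr : ∀ a, ∀ y ∈ Y, M.r a y ∈ Y) :
    Bimod A Y where
  l a := ((M.l a).comp Y.subtypeL).codRestrict Y fun y => hl a y y.2
  r a := ((M.r a).comp Y.subtypeL).codRestrict Y fun y => hr a y y.2
  l_mul a b y := Subtype.ext (M.l_mul a b y)
  r_mul a b y := Subtype.ext (M.r_mul a b y)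
  lr a b y := Subtype.ext (M.lr a b y)

noncomputable def algBimod (A : Type*) [NormedRing A] [NormedAlgebra ℂ A] : Bimod A A where
  l a := ContinuousLinearMap.mul ℂ A a
  r a := (ContinuousLinearMap.mul ℂ A).flip a
  l_mul a b x := mul_assoc a b x
  r_mul a b x := (mul_assoc x a b).symm
  lr a b x := (mul_assoc a x b).symm

noncomputable def idealBimod (I : Submodule ℂ A)
    (hL : ∀ a, ∀ x ∈ I, a * x ∈ I) (hR : ∀ a, ∀ x ∈ I, x * a ∈ I) :
    Bimod A I where
  l a := ((ContinuousLinearMap.mul ℂ A a).comp I.subtypeL).codRestrict I fun x => hL a x x.2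
  r a := (((ContinuousLinearMap.mul ℂ A).flip a).comp I.subtypeL).codRestrict I fun x => hR a x x.2
  l_mul a b x := Subtype.ext (mul_assoc a b (x : A))
  r_mul a b x := Subtype.ext (mul_assoc (x : A) a b).symm
  lr a b x := Subtype.ext (mul_assoc a (x : A) b).symm

/-- Left multiplication by $a$ as an operator on a subspace $K$ invariant under it. -/
noncomputable def lmulS (K : Submodule ℂ A) (a : A) (h : ∀ y ∈ K, a * y ∈ K) :
    ↥K →L[ℂ] ↥K :=
  ((ContinuousLinearMap.mul ℂ A a).comp K.subtypeL).codRestrict K fun y => h y y.2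

/-- Right multiplication by $a$ as an operator on a subspace $K$ invariant under it. -/
noncomputable def rmulS (K : Submodule ℂ A) (a : A) (h : ∀ y ∈ K, y * a ∈ K) :
    ↥K →L[ℂ] ↥K :=
  (((ContinuousLinearMap.mul ℂ A).flip a).comp K.subtypeL).codRestrict K fun y => h y y.2

/-!
Let `K = J ⊓ I`. Restricting a derivation `D : A → J*` to `I → K*` and using ideal amenability
of `I` gives `f ∈ K*`; a Hahn–Banach extension `G ∈ A*` of `f` yields `D₀ = D - ad G`, which
vanishes on `I × K`. Testing against the approximate identity (`D₀ (e x) → D₀ x` and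
`D₀ a (e j) → D₀ a j`) shows that `D₀` vanishes on `I` and every `D₀ a` vanishes on `K`.
If `‖e‖ ≤ C`, the approximate identity also splits each `s ∈ J ⊔ I` as `j + x` with
`‖j‖ ≤ (C + 2) ‖s‖` (replace `j, x` by `j - e j, x + e j`), so `J ⊔ I` is closed and `D₀` lifts
to a derivation into `(J ⊔ I)*` vanishing on `I`, that is, a derivation of `A / I` into
`((J ⊔ I) / I)*`. Ideal amenability of `A / I` makes the lift inner, hence `D₀` and `D` are inner.
-/

section Bimod

variable {M : Bimod A X} {D T : A →L[ℂ] X}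

theorem IsDerivation.sub (hD : IsDerivation M D) (hT : IsDerivation M T) :
    IsDerivation M (D - T) := by
  intro a b
  simp only [sub_apply, hD a b, hT a b, map_sub]
  abel

theorem IsInner.isDerivation (h : IsInner M D) : IsDerivation M D := by
  obtain ⟨x, hx⟩ := h
  intro a b
  simp only [hx, map_sub, M.l_mul, M.r_mul, M.lr]
  abel

theorem IsInner.add (hD : IsInner M D) (hT : IsInner M T) : IsInner M (D + T) := by
  obtain ⟨x, hx⟩ := hD
  obtain ⟨y, hy⟩ := hT
  refine ⟨x + y, fun a => ?_⟩
  simp only [add_apply, hx, hy, map_add]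
  abel

end Bimod

section IdealDual

variable (J : Submodule ℂ A) (hJL : ∀ a, ∀ x ∈ J, a * x ∈ J) (hJR : ∀ a, ∀ x ∈ J, x * a ∈ J)

theorem isDerivation_idealBimod_dual_iff (D : A →L[ℂ] (J →L[ℂ] ℂ)) :
    IsDerivation (idealBimod J hJL hJR).dual D ↔ ∀ a b (j : J),
      D (a * b) j = D b ⟨j * a, hJR a j j.2⟩ + D a ⟨b * j, hJL b j j.2⟩ := by
  refine ⟨fun h a b j => by rw [h a b]; rfl, fun h a b => ?_⟩
  ext j
  exact h a b j

theorem isInner_idealBimod_dual_of_apply {D : A →L[ℂ] (J →L[ℂ] ℂ)} (φ : J →L[ℂ] ℂ)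
    (h : ∀ a (j : J), D a j = φ ⟨j * a, hJR a j j.2⟩ - φ ⟨a * j, hJL a j j.2⟩) :
    IsInner (idealBimod J hJL hJR).dual D :=
  ⟨φ, fun a => by ext j; exact h a j⟩

noncomputable def dualCommutator (G : A →L[ℂ] ℂ) : A →L[ℂ] (J →L[ℂ] ℂ) :=
  ((compL ℂ J A ℂ).flip J.subtypeL).comp
    ((compL ℂ A A ℂ G).comp ((ContinuousLinearMap.mul ℂ A).flip - ContinuousLinearMap.mul ℂ A))

theorem dualCommutator_apply (G : A →L[ℂ] ℂ) (a : A) (j : J) :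
    dualCommutator J G a j = G (j * a) - G (a * j) := by
  simp [dualCommutator]

theorem isInner_dualCommutator (G : A →L[ℂ] ℂ) :
    IsInner (idealBimod J hJL hJR).dual (dualCommutator J G) :=
  isInner_idealBimod_dual_of_apply J hJL hJR (G.comp J.subtypeL) fun a j =>
    dualCommutator_apply J G a j

end IdealDual

section Restriction

variable {J : Submodule ℂ A} {hJL : ∀ a, ∀ x ∈ J, a * x ∈ J} {hJR : ∀ a, ∀ x ∈ J, x * a ∈ J}

noncomputable def restrictDual (D : A →L[ℂ] (J →L[ℂ] ℂ)) (I : Submodule ℂ A) :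
    I →L[ℂ] (↥(J ⊓ I) →L[ℂ] ℂ) :=
  ((compL ℂ _ J ℂ).flip ((J ⊓ I).subtypeL.codRestrict J fun k => k.2.1)).comp (D.comp I.subtypeL)

theorem restrictDual_apply (D : A →L[ℂ] (J →L[ℂ] ℂ)) (I : Submodule ℂ A) (x : I) (k : ↥(J ⊓ I)) :
    restrictDual D I x k = D x ⟨k, k.2.1⟩ := rfl

theorem restrictDual_mul {D : A →L[ℂ] (J →L[ℂ] ℂ)} (hD : IsDerivation (idealBimod J hJL hJR).dual D)
    {I : Submodule ℂ A} (hIL : ∀ a, ∀ x ∈ I, a * x ∈ I)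
    (hKL : ∀ x ∈ I, ∀ y ∈ J ⊓ I, x * y ∈ J ⊓ I) (hKR : ∀ x ∈ I, ∀ y ∈ J ⊓ I, y * x ∈ J ⊓ I)
    (x y : I) :
    restrictDual D I ⟨x * y, hIL x y y.2⟩ =
      (restrictDual D I y).comp (rmulS (J ⊓ I) x fun z hz => hKR x x.2 z hz) +
      (restrictDual D I x).comp (lmulS (J ⊓ I) y fun z hz => hKL y y.2 z hz) := by
  ext k
  exact (isDerivation_idealBimod_dual_iff J hJL hJR D).1 hD x y ⟨k, k.2.1⟩

theorem sub_dualCommutator_apply_eq_zero {D : A →L[ℂ] (J →L[ℂ] ℂ)} {I : Submodule ℂ A}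
    {hKL : ∀ x ∈ I, ∀ y ∈ J ⊓ I, x * y ∈ J ⊓ I} {hKR : ∀ x ∈ I, ∀ y ∈ J ⊓ I, y * x ∈ J ⊓ I}
    {f : ↥(J ⊓ I) →L[ℂ] ℂ}
    (hf : ∀ x : I, restrictDual D I x = f.comp (rmulS (J ⊓ I) x fun z hz => hKR x x.2 z hz) -
      f.comp (lmulS (J ⊓ I) x fun z hz => hKL x x.2 z hz))
    {G : A →L[ℂ] ℂ} (hG : ∀ k : ↥(J ⊓ I), G k = f k) {x : A} (hx : x ∈ I) (k : J)
    (hk : (k : A) ∈ I) : (D - dualCommutator J G) x k = 0 := by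
  have := DFunLike.congr_fun (hf ⟨x, hx⟩) ⟨k, k.2, hk⟩
  rw [restrictDual_apply, sub_apply, comp_apply, comp_apply, ← hG, ← hG] at this
  rw [sub_apply, sub_apply, dualCommutator_apply, this]
  exact sub_self _

end Restriction

section ApproximateIdentity

variable {J I : Submodule ℂ A} {hJL : ∀ a, ∀ x ∈ J, a * x ∈ J} {hJR : ∀ a, ∀ x ∈ J, x * a ∈ J}
  {D : A →L[ℂ] (J →L[ℂ] ℂ)} {ι : Type*} {p : Filter ι} [p.NeBot] {e : ι → A}

theorem eq_zero_of_apply_inf_eq_zero (hD : IsDerivation (idealBimod J hJL hJR).dual D)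
    (hIL : ∀ a, ∀ x ∈ I, a * x ∈ I) (hIR : ∀ a, ∀ x ∈ I, x * a ∈ I) (he : ∀ i, e i ∈ I)
    (hconv : ∀ x ∈ I, Tendsto (fun i => e i * x) p (𝓝 x))
    (h : ∀ x ∈ I, ∀ k : J, (k : A) ∈ I → D x k = 0) {x : A} (hx : x ∈ I) : D x = 0 := by
  ext j
  have hprod : ∀ i, D (e i * x) j = 0 := fun i => by
    rw [(isDerivation_idealBimod_dual_iff J hJL hJR D).1 hD, h x hx _ (hIL _ _ (he i)),
      h _ (he i) _ (hIR _ x hx), add_zero]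
  have hlim := ((D.flip j).continuous.tendsto x).comp (hconv x hx)
  simp only [Function.comp_def, flip_apply, hprod] at hlim
  exact tendsto_nhds_unique hlim tendsto_const_nhds

theorem apply_eq_zero_of_mem (hD : IsDerivation (idealBimod J hJL hJR).dual D)
    (hIL : ∀ a, ∀ x ∈ I, a * x ∈ I) (he : ∀ i, e i ∈ I)
    (hconv : ∀ x ∈ I, Tendsto (fun i => e i * x) p (𝓝 x)) (h : ∀ x ∈ I, D x = 0) (a : A)
    (j : J) (hj : (j : A) ∈ I) : D a j = 0 := by
  have hprod : ∀ i, D a ⟨e i * j, hJL _ _ j.2⟩ = 0 := fun i => by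
    have := (isDerivation_idealBimod_dual_iff J hJL hJR D).1 hD a (e i) j
    rwa [h _ (hIL a _ (he i)), h _ (he i), zero_apply, zero_apply, zero_add, eq_comm] at this
  have hj' : Tendsto (fun i => (⟨e i * j, hJL _ _ j.2⟩ : J)) p (𝓝 j) :=
    Topology.IsInducing.subtypeVal.tendsto_nhds_iff.2 (hconv j hj)
  have hlim := ((D a).continuous.tendsto j).comp hj'
  simp only [Function.comp_def, hprod] at hlim
  exact tendsto_nhds_unique hlim tendsto_const_nhds

end ApproximateIdentity

section SupSplitting

variable {𝕜 E : Type*}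

def SupSplitsBounded [Ring 𝕜] [SeminormedAddCommGroup E] [Module 𝕜 E] (J I : Submodule 𝕜 E)
    (c : ℝ) : Prop :=
  ∀ s ∈ J ⊔ I, ∃ j ∈ J, ∃ x ∈ I, j + x = s ∧ ‖j‖ ≤ c * ‖s‖

theorem isClosed_sup_of_supSplitsBounded [Ring 𝕜] [NormedAddCommGroup E] [CompleteSpace E]
    [Module 𝕜 E] {J I : Submodule 𝕜 E} {c : ℝ} (hJ : IsClosed (J : Set E))
    (hI : IsClosed (I : Set E)) (h : SupSplitsBounded J I c) :
    IsClosed ((J ⊔ I : Submodule 𝕜 E) : Set E) := by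
  refine isClosed_of_closure_subset fun a ha => ?_
  choose s hs hsa using fun n : ℕ => Metric.mem_closure_iff.1 ha ((1 / 2 : ℝ) ^ n) (by positivity)
  have hsd : ∀ n, ‖s (n + 1) - s n‖ ≤ 2 * (1 / 2) ^ n := fun n => by
    have h₁ := hsa n
    have h₂ := hsa (n + 1)
    rw [pow_succ] at h₂
    rw [← dist_eq_norm]
    linarith [dist_triangle_left (s (n + 1)) (s n) a, pow_nonneg (by norm_num : (0 : ℝ) ≤ 1 / 2) n]
  choose j hj x hx hjx hjn using fun n => h _ (sub_mem (hs (n + 1)) (hs n))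
  -- the `J`-parts of the increments are summable, so their partial sums converge in `J`
  have ht : CauchySeq fun n => ∑ m ∈ Finset.range n, j m := by
    refine cauchySeq_of_le_geometric (1 / 2) (|c| * 2) (by norm_num) fun n => ?_
    rw [dist_eq_norm, Finset.sum_range_succ, sub_add_cancel_left, norm_neg, mul_assoc]
    exact (hjn n).trans (mul_le_mul (le_abs_self c) (hsd n) (norm_nonneg _) (abs_nonneg c))
  obtain ⟨b, hb⟩ := cauchySeq_tendsto_of_complete ht
  have hbJ : b ∈ J := hJ.mem_of_tendsto hb (Eventually.of_forall fun n =>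
    Submodule.sum_mem _ fun m _ => hj m)
  have hsI : ∀ n, s n - s 0 - ∑ m ∈ Finset.range n, j m ∈ I := fun n => by
    rw [← Finset.sum_range_sub s]
    simp_rw [← hjx, Finset.sum_add_distrib, add_sub_cancel_left]
    exact Submodule.sum_mem _ fun m _ => hx m
  have hsa' : Tendsto s atTop (𝓝 a) := tendsto_iff_dist_tendsto_zero.2 <|
    squeeze_zero (fun _ => dist_nonneg) (fun n => (dist_comm (s n) a).trans_le (hsa n).le)
      (tendsto_pow_atTop_nhds_zero_of_lt_one (by norm_num) (by norm_num))
  have hI' : a - s 0 - b ∈ I :=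
    hI.mem_of_tendsto ((hsa'.sub tendsto_const_nhds).sub hb) (Eventually.of_forall hsI)
  have hdecomp : a = (s 0 + b) + (a - s 0 - b) := by abel
  rw [SetLike.mem_coe, hdecomp]
  exact add_mem (add_mem (hs 0) (Submodule.mem_sup_left hbJ)) (Submodule.mem_sup_right hI')

theorem exists_extension_sup_of_supSplitsBounded [NontriviallyNormedField 𝕜]
    [NormedAddCommGroup E] [NormedSpace 𝕜 E] {V F : Type*} [NormedAddCommGroup V]
    [NormedSpace 𝕜 V] [NormedAddCommGroup F] [NormedSpace 𝕜 F] {J I : Submodule 𝕜 E} {c : ℝ}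
    (h : SupSplitsBounded J I c) (B : V →L[𝕜] (J →L[𝕜] F))
    (hB : ∀ v (j : J), (j : E) ∈ I → B v j = 0) :
    ∃ B' : V →L[𝕜] (↥(J ⊔ I) →L[𝕜] F),
      ∀ v (s : ↥(J ⊔ I)) (j : J), (s : E) - j ∈ I → B' v s = B v j := by
  choose q hqJ x hx hqx hqn using fun s : ↥(J ⊔ I) => h s s.2
  have hq : ∀ v (s : ↥(J ⊔ I)) (j : J), (s : E) - j ∈ I → B v ⟨q s, hqJ s⟩ = B v j :=
    fun v s j hsj => by
      rw [← sub_eq_zero, ← map_sub]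
      refine hB v _ ?_
      have hdiff : (s : E) - j - x s = q s - j := by rw [← hqx s]; abel
      simpa [hdiff] using sub_mem hsj (hx s)
  refine ⟨LinearMap.mkContinuous₂ (LinearMap.mk₂ 𝕜 (fun v s => B v ⟨q s, hqJ s⟩) ?_ ?_ ?_ ?_)
    (‖B‖ * c) ?_, fun v s j hsj => hq v s j hsj⟩
  · intro v w s
    simp only [map_add, add_apply]
  · intro r v s
    simp only [map_smul, smul_apply]
  · intro v s t
    rw [hq v (s + t) (⟨q s, hqJ s⟩ + ⟨q t, hqJ t⟩), map_add]
    have hsum : ((s + t : ↥(J ⊔ I)) : E) - ((⟨q s, hqJ s⟩ + ⟨q t, hqJ t⟩ : J) : E) = x s + x t := by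
      rw [Submodule.coe_add, Submodule.coe_add, ← hqx s, ← hqx t]
      abel
    rw [hsum]
    exact add_mem (hx s) (hx t)
  · intro r v s
    rw [hq v (r • s) (r • ⟨q s, hqJ s⟩), map_smul]
    have hsmul : ((r • s : ↥(J ⊔ I)) : E) - ((r • ⟨q s, hqJ s⟩ : J) : E) = r • x s := by
      rw [Submodule.coe_smul, Submodule.coe_smul, ← hqx s, smul_add, add_sub_cancel_left]
    rw [hsmul]
    exact Submodule.smul_mem _ r (hx s)
  · intro v s
    have hc : ‖q s‖ ≤ c * ‖s‖ := hqn s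
    calc ‖B v ⟨q s, hqJ s⟩‖ ≤ ‖B v‖ * ‖q s‖ := (B v).le_opNorm _
      _ ≤ ‖B‖ * ‖v‖ * (c * ‖s‖) :=
          mul_le_mul (B.le_opNorm v) hc (norm_nonneg _) (by positivity)
      _ = ‖B‖ * c * ‖v‖ * ‖s‖ := by ring

end SupSplitting

section Sup

variable {J I : Submodule ℂ A}

theorem supSplitsBounded_of_approxIdentity (hJL : ∀ a, ∀ x ∈ J, a * x ∈ J)
    (hIR : ∀ a, ∀ x ∈ I, x * a ∈ I) {ι : Type*} {p : Filter ι} [p.NeBot] {e : ι → A}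
    (he : ∀ i, e i ∈ I) {C : ℝ} (hC : ∀ i, ‖e i‖ ≤ C)
    (hconv : ∀ x ∈ I, Tendsto (fun i => e i * x) p (𝓝 x)) : SupSplitsBounded J I (C + 2) := by
  intro s hs
  obtain ⟨j, hj, x, hx, rfl⟩ := Submodule.mem_sup.1 hs
  rcases eq_or_ne (j + x) 0 with h0 | h0
  · exact ⟨0, J.zero_mem, 0, I.zero_mem, by rw [h0, add_zero], by simp [h0]⟩
  obtain ⟨i, hi⟩ := (Metric.tendsto_nhds.1 (hconv x hx) ‖j + x‖ (norm_pos_iff.2 h0)).exists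
  refine ⟨j - e i * j, J.sub_mem hj (hJL _ _ hj), x + e i * j, I.add_mem hx (hIR _ _ (he i)),
    by abel, ?_⟩
  have hsplit : j - e i * j = (j + x) - e i * (j + x) + (e i * x - x) := by noncomm_ring
  have h₁ : ‖(j + x) - e i * (j + x)‖ ≤ ‖j + x‖ + C * ‖j + x‖ :=
    (norm_sub_le _ _).trans (add_le_add_right ((norm_mul_le _ _).trans
      (mul_le_mul_of_nonneg_right (hC i) (norm_nonneg _))) _)
  have h₂ : ‖e i * x - x‖ < ‖j + x‖ := by rwa [← dist_eq_norm]
  rw [hsplit]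
  linarith [norm_add_le ((j + x) - e i * (j + x)) (e i * x - x)]

theorem mul_mem_sup_of_left (hJ : ∀ a, ∀ x ∈ J, a * x ∈ J) (hI : ∀ a, ∀ x ∈ I, a * x ∈ I)
    (a : A) (s : A) (hs : s ∈ J ⊔ I) : a * s ∈ J ⊔ I := by
  obtain ⟨j, hj, x, hx, rfl⟩ := Submodule.mem_sup.1 hs
  rw [mul_add]
  exact Submodule.add_mem_sup (hJ a j hj) (hI a x hx)

theorem mul_mem_sup_of_right (hJ : ∀ a, ∀ x ∈ J, x * a ∈ J) (hI : ∀ a, ∀ x ∈ I, x * a ∈ I)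
    (a : A) (s : A) (hs : s ∈ J ⊔ I) : s * a ∈ J ⊔ I := by
  obtain ⟨j, hj, x, hx, rfl⟩ := Submodule.mem_sup.1 hs
  rw [add_mul]
  exact Submodule.add_mem_sup (hJ a j hj) (hI a x hx)

variable {hJL : ∀ a, ∀ x ∈ J, a * x ∈ J} {hJR : ∀ a, ∀ x ∈ J, x * a ∈ J}
  {hLL : ∀ a, ∀ x ∈ J ⊔ I, a * x ∈ J ⊔ I} {hLR : ∀ a, ∀ x ∈ J ⊔ I, x * a ∈ J ⊔ I}
  {D : A →L[ℂ] (J →L[ℂ] ℂ)} {D' : A →L[ℂ] (↥(J ⊔ I) →L[ℂ] ℂ)}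

theorem IsDerivation.of_sub_mem (hD : IsDerivation (idealBimod J hJL hJR).dual D)
    (hIL : ∀ a, ∀ x ∈ I, a * x ∈ I) (hIR : ∀ a, ∀ x ∈ I, x * a ∈ I)
    (hD' : ∀ a (s : ↥(J ⊔ I)) (j : J), (s : A) - j ∈ I → D' a s = D a j) :
    IsDerivation (idealBimod (J ⊔ I) hLL hLR).dual D' := by
  refine (isDerivation_idealBimod_dual_iff _ hLL hLR D').2 fun a b s => ?_
  obtain ⟨j, hj, x, hx, hs⟩ := Submodule.mem_sup.1 s.2
  rw [hD' (a * b) s ⟨j, hj⟩ (by simpa [← hs]),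
    hD' b _ ⟨j * a, hJR a j hj⟩ (by simpa [← hs, add_mul] using hIR a x hx),
    hD' a _ ⟨b * j, hJL b j hj⟩ (by simpa [← hs, mul_add] using hIL b x hx)]
  exact (isDerivation_idealBimod_dual_iff J hJL hJR D).1 hD a b ⟨j, hj⟩

theorem eq_zero_of_sub_mem (hD' : ∀ a (s : ↥(J ⊔ I)) (j : J), (s : A) - j ∈ I → D' a s = D a j)
    {x : A} (hx : D x = 0) : D' x = 0 := by
  ext s
  obtain ⟨j, hj, y, hy, hs⟩ := Submodule.mem_sup.1 s.2
  rw [hD' x s ⟨j, hj⟩ (by simpa [← hs]), hx, zero_apply, zero_apply]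

theorem IsInner.of_sub_mem (hD' : ∀ a (s : ↥(J ⊔ I)) (j : J), (s : A) - j ∈ I → D' a s = D a j)
    (h : IsInner (idealBimod (J ⊔ I) hLL hLR).dual D') : IsInner (idealBimod J hJL hJR).dual D := by
  obtain ⟨F, hF⟩ := h
  refine isInner_idealBimod_dual_of_apply J hJL hJR
    (F.comp (J.subtypeL.codRestrict (J ⊔ I) fun j => Submodule.mem_sup_left j.2)) fun a j => ?_
  rw [← hD' a ⟨j, Submodule.mem_sup_left j.2⟩ j (by simp), hF a]
  rfl

end Sup
theorem stmt_17
    {A : Type*} [NormedRing A] [NormedAlgebra ℂ A] [CompleteSpace A]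
    (I : Submodule ℂ A) (hIc : IsClosed (I : Set A))
    (hIL : ∀ a : A, ∀ x ∈ I, a * x ∈ I) (hIR : ∀ a : A, ∀ x ∈ I, x * a ∈ I)
    -- $I$ has a bounded approximate identity
    (ι : Type*) (p : Filter ι) [p.NeBot] (e : ι → ↥I)
    (hb : ∃ C : ℝ, ∀ i, ‖e i‖ ≤ C)
    (hai : ∀ x : ↥I, Tendsto (fun i => (e i : A) * (x : A)) p (𝓝 (x : A)) ∧
                     Tendsto (fun i => (x : A) * (e i : A)) p (𝓝 (x : A)))
    -- $I$ is ideally amenable: for every closed ideal $K$ of $I$, $H^1(I, K^*) = 0$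
    (hIam : ∀ (K : Submodule ℂ A), IsClosed (K : Set A) → K ≤ I →
        ∀ (hKL : ∀ x ∈ I, ∀ y ∈ K, x * y ∈ K) (hKR : ∀ x ∈ I, ∀ y ∈ K, y * x ∈ K),
        ∀ D : ↥I →L[ℂ] (↥K →L[ℂ] ℂ),
          (∀ x y : ↥I, D ⟨(x : A) * (y : A), hIL x y y.2⟩ =
              (D y).comp (rmulS K (x : A) (fun z hz => hKR x x.2 z hz)) +
              (D x).comp (lmulS K (y : A) (fun z hz => hKL y y.2 z hz))) →
          ∃ f : ↥K →L[ℂ] ℂ, ∀ x : ↥I,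
            D x = f.comp (rmulS K (x : A) (fun z hz => hKR x x.2 z hz)) -
                  f.comp (lmulS K (x : A) (fun z hz => hKL x x.2 z hz)))
    -- $A/I$ is ideally amenable: for every closed ideal $L/I$ of $A/I$, $H^1(A/I, (L/I)^*) = 0$
    (hQam : ∀ (L : Submodule ℂ A), IsClosed (L : Set A) → I ≤ L →
        ∀ (hLL : ∀ a : A, ∀ x ∈ L, a * x ∈ L) (hLR : ∀ a : A, ∀ x ∈ L, x * a ∈ L),
        ∀ D : A →L[ℂ] (↥L →L[ℂ] ℂ),
          IsDerivation (idealBimod L hLL hLR).dual D →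
          (∀ x : A, x ∈ I → D x = 0) →
          (∀ (a : A) (x : ↥L), (x : A) ∈ I → D a x = 0) →
          ∃ f : ↥L →L[ℂ] ℂ, (∀ x : ↥L, (x : A) ∈ I → f x = 0) ∧
            ∀ a, D a = (idealBimod L hLL hLR).dual.l a f - (idealBimod L hLL hLR).dual.r a f) :
    -- then $A$ is ideally amenable
    ∀ (J : Submodule ℂ A) (hJc : IsClosed (J : Set A))
      (hJL : ∀ a : A, ∀ x ∈ J, a * x ∈ J) (hJR : ∀ a : A, ∀ x ∈ J, x * a ∈ J),
      ∀ D : A →L[ℂ] (↥J →L[ℂ] ℂ),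
        IsDerivation (idealBimod J hJL hJR).dual D → IsInner (idealBimod J hJL hJR).dual D := by
  intro J hJc hJL hJR D hD
  obtain ⟨C, hC⟩ := hb
  have he : ∀ i, (e i : A) ∈ I := fun i => (e i).2
  have hconv : ∀ x ∈ I, Tendsto (fun i => (e i : A) * x) p (𝓝 x) := fun x hx => (hai ⟨x, hx⟩).1
  have hKL : ∀ x ∈ I, ∀ y ∈ J ⊓ I, x * y ∈ J ⊓ I := fun x _ y hy => ⟨hJL x y hy.1, hIL x y hy.2⟩
  have hKR : ∀ x ∈ I, ∀ y ∈ J ⊓ I, y * x ∈ J ⊓ I := fun x _ y hy => ⟨hJR x y hy.1, hIR x y hy.2⟩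
  obtain ⟨f, hf⟩ := hIam (J ⊓ I) (hJc.inter hIc) inf_le_right hKL hKR (restrictDual D I)
    (restrictDual_mul hD hIL hKL hKR)
  obtain ⟨G, hG, -⟩ := exists_extension_norm_eq (J ⊓ I) f
  set D₀ := D - dualCommutator J G
  have hD₀ : IsDerivation (idealBimod J hJL hJR).dual D₀ :=
    hD.sub (isInner_dualCommutator J hJL hJR G).isDerivation
  have hD₀I : ∀ x ∈ I, D₀ x = 0 := fun x hx => eq_zero_of_apply_inf_eq_zero hD₀ hIL hIR he hconv
    (fun _ hx k hk => sub_dualCommutator_apply_eq_zero hf hG hx k hk) hx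
  have hsplit : SupSplitsBounded J I (C + 2) :=
    supSplitsBounded_of_approxIdentity hJL hIR he hC hconv
  obtain ⟨D₁, hD₁⟩ := exists_extension_sup_of_supSplitsBounded hsplit D₀
    (apply_eq_zero_of_mem hD₀ hIL he hconv hD₀I)
  obtain ⟨F, -, hF⟩ := hQam (J ⊔ I) (isClosed_sup_of_supSplitsBounded hJc hIc hsplit) le_sup_right
    (mul_mem_sup_of_left hJL hIL) (mul_mem_sup_of_right hJR hIR) D₁ (hD₀.of_sub_mem hIL hIR hD₁)
    (fun x hx => eq_zero_of_sub_mem hD₁ (hD₀I x hx))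
    fun a s hs => by rw [hD₁ a s 0 (by simpa), map_zero]
  simpa [D₀] using (IsInner.of_sub_mem hD₁ ⟨F, hF⟩).add (isInner_dualCommutator J hJL hJR G)

end Paper
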